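/- Let T be a tournament on n ≥ 3 vertices with n > ℓ ≥ 3 and 0 < γ ≤ 1/6. If T has an H(ℓ+1, γ)-partition, then T has an H(ℓ, γ)-partition. Consequently, every tournament on n vertices has an H(ℓ, γ)-partition for every 3 ≤ ℓ ≤ n. -/

import Mathlib

def IsTournament {V : Type*} (T : V → V → Prop) : Prop :=
  (∀ v, ¬ T v v) ∧ ∀ u v : V, u ≠ v → (T u v ↔ ¬ T v u)

/-- `(W_1,…,W_r, w_1,…,w_{r-1})` is an `H(ℓ,γ)`-partition of the tournament `T`:
the `W_i` are pairwise disjoint, the `w_i` are distinct and outside all `W_i`,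
together they cover the vertex set, `γℓ ≤ |W_i| ≤ ℓ`, and for each `i`,
`W_i ⇒ w_i ⇒ W_{i+1}`. -/
def IsHPartition {V : Type*} [Fintype V] [DecidableEq V] (T : V → V → Prop)
    (ℓ : ℕ) (γ : ℝ) (Ws : List (Finset V)) (ws : List V) : Prop :=
  ws.length + 1 = Ws.length ∧
  Ws.Pairwise Disjoint ∧
  ws.Nodup ∧
  (∀ w ∈ ws, ∀ W ∈ Ws, w ∉ W) ∧
  (∀ v : V, (∃ W ∈ Ws, v ∈ W) ∨ v ∈ ws) ∧
  (∀ W ∈ Ws, γ * ℓ ≤ (W.card : ℝ) ∧ W.card ≤ ℓ) ∧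
  (∀ i : ℕ, ∀ w ∈ ws[i]?,
    (∀ W ∈ Ws[i]?, ∀ v ∈ W, T v w) ∧
    (∀ W ∈ Ws[i + 1]?, ∀ v ∈ W, T w v))

/-!
Each block of an `H(ℓ+1, γ)`-partition has at most `ℓ + 1` vertices, and only blocks of exactly
`ℓ + 1` vertices need to change. Such a block `W` is split at a vertex `w` whose in- and
out-degrees inside `W` both exceed `d = ⌊γℓ⌋`, into its in-neighbourhood `A` and
out-neighbourhood `B`, giving `A ⇒ w ⇒ B`; both parts have between `d + 1 > γℓ` and `ℓ` vertices.
Such a `w` exists because in a tournament the vertices of out-degree at most `d` span a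
subtournament with at most `2d + 1` vertices (its average out-degree is half its order minus
one), likewise for in-degree, and `4d + 2 < ℓ + 1` as `γ ≤ 1/6` and `ℓ ≥ 3`. The old arcs into
and out of `W` remain valid for the parts, as they are subsets of `W`. Iterating from the trivial
`H(n, γ)`-partition `{V}` gives every `3 ≤ ℓ ≤ n`.
-/

open Finset

namespace IsTournament

open Classical

variable {V : Type*} {T : V → V → Prop}

lemma asymm (hT : IsTournament T) {u v : V} (h : T u v) : ¬ T v u :=
  (hT.2 u v fun huv => hT.1 v (huv ▸ h)).mp h

lemma of_not_rel (hT : IsTournament T) {u v : V} (huv : u ≠ v) (h : ¬ T u v) : T v u :=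
  not_not.mp fun h' => h ((hT.2 u v huv).mpr h')

lemma flip (hT : IsTournament T) : IsTournament (flip T) :=
  ⟨hT.1, fun u v huv => by
    have := hT.2 v u huv.symm
    simp only [_root_.flip]
    tauto⟩

lemma disjoint_filter_in_out (hT : IsTournament T) (W : Finset V) (w : V) :
    Disjoint {u ∈ W | T u w} {u ∈ W | T w u} :=
  disjoint_filter.mpr fun _ _ h => hT.asymm h

variable [DecidableEq V]

lemma insert_filter_in_union_filter_out (hT : IsTournament T) {W : Finset V} {w : V}
    (hw : w ∈ W) : insert w ({u ∈ W | T u w} ∪ {u ∈ W | T w u}) = W := by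
  ext u
  by_cases huw : u = w
  · simp [huw, hw]
  · simp only [mem_insert, mem_union, mem_filter, huw, false_or, ← and_or_left,
      and_iff_left_iff_imp]
    exact fun _ => or_iff_not_imp_left.mpr (hT.of_not_rel huw)

lemma card_filter_in_add_card_filter_out (hT : IsTournament T) {W : Finset V} {w : V}
    (hw : w ∈ W) : #{u ∈ W | T u w} + #{u ∈ W | T w u} + 1 = #W := by
  conv_rhs => rw [← hT.insert_filter_in_union_filter_out hw]
  rw [card_insert_of_notMem (by simp [hT.1 w]),
    card_union_of_disjoint (hT.disjoint_filter_in_out W w)]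

lemma two_mul_sum_card_filter_out_add_card (hT : IsTournament T) (A : Finset V) :
    2 * ∑ v ∈ A, #{u ∈ A | T v u} + #A = #A * #A := by
  have hsymm : ∑ v ∈ A, #{u ∈ A | T v u} = ∑ v ∈ A, #{u ∈ A | T u v} := by
    simp only [card_filter]
    exact sum_comm
  calc 2 * ∑ v ∈ A, #{u ∈ A | T v u} + #A
      = ∑ v ∈ A, (#{u ∈ A | T u v} + #{u ∈ A | T v u} + 1) := by
        rw [sum_add_distrib, sum_add_distrib, ← hsymm, sum_const, smul_eq_mul, mul_one]
        ring
    _ = #A * #A := by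
        rw [sum_congr rfl fun v hv => hT.card_filter_in_add_card_filter_out hv, sum_const,
          smul_eq_mul]

lemma card_le_of_forall_card_filter_out_le (hT : IsTournament T) {A : Finset V} {d : ℕ}
    (h : ∀ v ∈ A, #{u ∈ A | T v u} ≤ d) : #A ≤ 2 * d + 1 := by
  rcases A.eq_empty_or_nonempty with rfl | hA
  · simp
  have hsum : ∑ v ∈ A, #{u ∈ A | T v u} ≤ #A * d := by
    simpa using sum_le_card_nsmul A _ d h
  refine Nat.le_of_mul_le_mul_left ?_ hA.card_pos
  nlinarith [hT.two_mul_sum_card_filter_out_add_card A]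

lemma exists_lt_card_filter_in_and_out (hT : IsTournament T) {W : Finset V} {d : ℕ}
    (hW : 4 * d + 3 ≤ #W) : ∃ w ∈ W, d < #{u ∈ W | T u w} ∧ d < #{u ∈ W | T w u} := by
  by_contra! h
  set Lin := {v ∈ W | #{u ∈ W | T u v} ≤ d}
  set Lout := {v ∈ W | #{u ∈ W | T v u} ≤ d}
  have hin : #Lin ≤ 2 * d + 1 := hT.flip.card_le_of_forall_card_filter_out_le fun v hv =>
    (card_le_card (filter_subset_filter _ (filter_subset _ W))).trans (mem_filter.mp hv).2
  have hout : #Lout ≤ 2 * d + 1 := hT.card_le_of_forall_card_filter_out_le fun v hv =>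
    (card_le_card (filter_subset_filter _ (filter_subset _ W))).trans (mem_filter.mp hv).2
  have hcover : W ⊆ Lin ∪ Lout := fun v hv => by
    by_cases hd : d < #{u ∈ W | T u v}
    · exact mem_union_right _ (mem_filter.mpr ⟨hv, h v hv hd⟩)
    · exact mem_union_left _ (mem_filter.mpr ⟨hv, not_lt.mp hd⟩)
  have := (card_le_card hcover).trans (card_union_le Lin Lout)
  omega

end IsTournament

section HChain

variable {V : Type*}

def IsHChain (T : V → V → Prop) (P : Finset V → Prop) (Ws : List (Finset V)) (ws : List V) :
    Prop :=
  ws.length + 1 = Ws.length ∧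
  Ws.Pairwise Disjoint ∧
  ws.Nodup ∧
  (∀ w ∈ ws, ∀ W ∈ Ws, w ∉ W) ∧
  (∀ W ∈ Ws, P W) ∧
  (∀ i : ℕ, ∀ w ∈ ws[i]?,
    (∀ W ∈ Ws[i]?, ∀ v ∈ W, T v w) ∧
    (∀ W ∈ Ws[i + 1]?, ∀ v ∈ W, T w v))

def HSized (ℓ : ℕ) (γ : ℝ) (W : Finset V) : Prop := γ * ℓ ≤ #W ∧ #W ≤ ℓ

variable {T : V → V → Prop} {P : Finset V → Prop}

lemma isHChain_singleton_iff {W : Finset V} : IsHChain T P [W] [] ↔ P W := by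
  simp [IsHChain]

variable [DecidableEq V]

def covered (Ws : List (Finset V)) (ws : List V) : Finset V :=
  Ws.toFinset.biUnion id ∪ ws.toFinset

@[simp]
lemma mem_covered {Ws : List (Finset V)} {ws : List V} {v : V} :
    v ∈ covered Ws ws ↔ (∃ W ∈ Ws, v ∈ W) ∨ v ∈ ws := by
  simp [covered]

lemma covered_cons_cons (W : Finset V) (Ws : List (Finset V)) (w : V) (ws : List V) :
    covered (W :: Ws) (w :: ws) = insert w (W ∪ covered Ws ws) := by
  ext v
  simp only [mem_covered, List.mem_cons, mem_insert, mem_union]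
  grind

lemma isHChain_cons_cons_iff {W W' : Finset V} {Ws : List (Finset V)} {w : V} {ws : List V} :
    IsHChain T P (W :: W' :: Ws) (w :: ws) ↔
      P W ∧ (∀ v ∈ W, T v w) ∧ (∀ v ∈ W', T w v) ∧ w ∉ W ∧
        Disjoint (insert w W) (covered (W' :: Ws) ws) ∧ IsHChain T P (W' :: Ws) ws := by
  unfold IsHChain
  rw [← Nat.and_forall_add_one]
  simp only [List.getElem?_cons_zero, List.getElem?_cons_succ,
    List.length_cons, List.pairwise_cons, List.nodup_cons, List.forall_mem_cons,
    disjoint_insert_left, disjoint_left (s := W), mem_covered, Option.mem_def, Option.some.injEq,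
    forall_eq']
  grind

lemma IsTournament.hSized_or_exists_split (hT : IsTournament T) {ℓ : ℕ} {γ : ℝ} (hℓ : 3 ≤ ℓ)
    (hγ0 : 0 ≤ γ) (hγ : γ ≤ 1 / 6) {W : Finset V} (hW : HSized (ℓ + 1) γ W) :
    HSized ℓ γ W ∨ ∃ w A B, insert w (A ∪ B) = W ∧ w ∉ A ∧ w ∉ B ∧ Disjoint A B ∧
      (∀ v ∈ A, T v w) ∧ (∀ v ∈ B, T w v) ∧ HSized ℓ γ A ∧ HSized ℓ γ B := by
  classical
  by_cases hle : #W ≤ ℓ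
  · left
    refine ⟨le_trans ?_ hW.1, hle⟩
    push_cast
    nlinarith
  right
  have hW' : #W = ℓ + 1 := le_antisymm hW.2 (not_le.mp hle)
  set d := ⌊γ * ℓ⌋₊
  have hd : d ≤ ℓ / 6 := by
    rw [← Nat.floor_div_eq_div (K := ℝ)]
    exact Nat.floor_le_floor (by push_cast; nlinarith)
  obtain ⟨w, hw, hin, hout⟩ := hT.exists_lt_card_filter_in_and_out (W := W) (d := d) (by omega)
  have hcard := hT.card_filter_in_add_card_filter_out hw
  have hsize : ∀ k : ℕ, d < k → γ * ℓ ≤ k := fun k hk =>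
    (Nat.lt_floor_add_one _).le.trans (by exact_mod_cast hk)
  exact ⟨w, _, _, hT.insert_filter_in_union_filter_out hw, by simp [hT.1 w], by simp [hT.1 w],
    hT.disjoint_filter_in_out W w, fun v hv => (mem_filter.mp hv).2,
    fun v hv => (mem_filter.mp hv).2, ⟨hsize _ hin, by omega⟩, ⟨hsize _ hout, by omega⟩⟩

theorem IsHChain.exists_refinement (hT : IsTournament T) {ℓ : ℕ} {γ : ℝ} (hℓ : 3 ≤ ℓ)
    (hγ0 : 0 ≤ γ) (hγ : γ ≤ 1 / 6) {W : Finset V} {Ws : List (Finset V)} {ws : List V}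
    (h : IsHChain T (HSized (ℓ + 1) γ) (W :: Ws) ws) :
    ∃ A Ws' ws', A ⊆ W ∧ IsHChain T (HSized ℓ γ) (A :: Ws') ws' ∧
      covered (A :: Ws') ws' = covered (W :: Ws) ws := by
  induction ws generalizing W Ws with
  | nil =>
    obtain rfl : Ws = [] := List.length_eq_zero_iff.mp (by simpa using h.1.symm)
    rcases hT.hSized_or_exists_split hℓ hγ0 hγ (isHChain_singleton_iff.mp h) with
      hW | ⟨w, A, B, rfl, hwA, hwB, hAB, hAw, hwB', hA, hB⟩
    · exact ⟨W, [], [], subset_rfl, isHChain_singleton_iff.mpr hW, rfl⟩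
    refine ⟨A, [B], [w], subset_union_left.trans (subset_insert _ _),
      isHChain_cons_cons_iff.mpr ⟨hA, hAw, hwB', hwA, ?_, isHChain_singleton_iff.mpr hB⟩, ?_⟩
    · simp [covered, disjoint_insert_left, hwB, hAB]
    · ext v
      simp [covered]
  | cons w ws ih =>
    have hlen : ws.length + 1 = Ws.length := by simpa using h.1
    obtain ⟨W', Ws, rfl⟩ := List.exists_cons_of_length_pos (l := Ws) (by omega)
    obtain ⟨hW, hWw, hwW', hwW, hdisj, htail⟩ := isHChain_cons_cons_iff.mp h
    obtain ⟨A', Ws', ws', hA'W', hchain, hcov⟩ := ih htail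
    rw [← hcov] at hdisj
    rcases hT.hSized_or_exists_split hℓ hγ0 hγ hW with
      hW | ⟨w₀, A, B, rfl, hw₀A, hw₀B, hAB, hAw₀, hw₀B', hA, hB⟩
    · exact ⟨W, A' :: Ws', w :: ws', subset_rfl, isHChain_cons_cons_iff.mpr
        ⟨hW, hWw, fun v hv => hwW' v (hA'W' hv), hwW, hdisj, hchain⟩,
        by rw [covered_cons_cons, covered_cons_cons, hcov]⟩
    have hinner : IsHChain T (HSized ℓ γ) (B :: A' :: Ws') (w :: ws') :=
      isHChain_cons_cons_iff.mpr ⟨hB, fun v hv => hWw v (by simp [hv]),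
        fun v hv => hwW' v (hA'W' hv), fun hw => hwW (by simp [hw]),
        hdisj.mono_left (insert_subset_insert _ (subset_union_right.trans (subset_insert _ _))),
        hchain⟩
    refine ⟨A, B :: A' :: Ws', w₀ :: w :: ws', subset_union_left.trans (subset_insert _ _),
      isHChain_cons_cons_iff.mpr ⟨hA, hAw₀, hw₀B', hw₀A, ?_, hinner⟩, ?_⟩
    · rw [covered_cons_cons]
      simp only [disjoint_insert_left, disjoint_insert_right, disjoint_union_left,
        disjoint_union_right, mem_insert, mem_union, not_or] at hdisj hwW ⊢
      grind [Disjoint.symm]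
    · rw [covered_cons_cons, covered_cons_cons, covered_cons_cons, hcov]
      ext v
      simp only [mem_insert, mem_union]
      tauto

variable [Fintype V]

lemma isHPartition_iff {ℓ : ℕ} {γ : ℝ} {Ws : List (Finset V)} {ws : List V} :
    IsHPartition T ℓ γ Ws ws ↔ IsHChain T (HSized ℓ γ) Ws ws ∧ covered Ws ws = univ := by
  simp only [IsHPartition, IsHChain, HSized, eq_univ_iff_forall, mem_covered]
  tauto

lemma isHPartition_univ (T : V → V → Prop) {γ : ℝ} (hγ : γ ≤ 1) :
    IsHPartition T (Fintype.card V) γ [univ] [] :=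
  isHPartition_iff.mpr ⟨isHChain_singleton_iff.mpr
    ⟨by simpa using mul_le_of_le_one_left (Nat.cast_nonneg _) hγ, le_rfl⟩, by simp [covered]⟩

theorem IsHPartition.exists_of_succ (hT : IsTournament T) {ℓ : ℕ} {γ : ℝ} (hℓ : 3 ≤ ℓ)
    (hγ0 : 0 ≤ γ) (hγ : γ ≤ 1 / 6) {Ws : List (Finset V)} {ws : List V}
    (h : IsHPartition T (ℓ + 1) γ Ws ws) : ∃ Ws' ws', IsHPartition T ℓ γ Ws' ws' := by
  obtain ⟨hchain, hcov⟩ := isHPartition_iff.mp h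
  obtain ⟨W, Ws, rfl⟩ := List.exists_cons_of_length_pos (l := Ws) (by have := hchain.1; omega)
  obtain ⟨A, Ws', ws', -, hchain', hcov'⟩ := hchain.exists_refinement hT hℓ hγ0 hγ
  exact ⟨_, _, isHPartition_iff.mpr ⟨hchain', hcov'.trans hcov⟩⟩

theorem exists_isHPartition (hT : IsTournament T) {ℓ : ℕ} {γ : ℝ} (hℓ : 3 ≤ ℓ)
    (hℓV : ℓ ≤ Fintype.card V) (hγ0 : 0 ≤ γ) (hγ : γ ≤ 1 / 6) :
    ∃ Ws ws, IsHPartition T ℓ γ Ws ws := by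
  induction hℓV using Nat.decreasingInduction with
  | self => exact ⟨_, _, isHPartition_univ T (by linarith)⟩
  | of_succ k _ ih =>
    obtain ⟨Ws, ws, h⟩ := ih (by omega)
    exact h.exists_of_succ hT hℓ hγ0 hγ

end HChain

theorem stmt5_general {V : Type*} [Fintype V] [DecidableEq V] {n ℓ : ℕ} (γ : ℝ)
    (hn : Fintype.card V = n) (T : V → V → Prop) (hT : IsTournament T)
    (hℓ : 3 ≤ ℓ) (hγ0 : 0 < γ) (hγ : γ ≤ 1 / 6) :
    ((∃ Ws ws, IsHPartition T (ℓ + 1) γ Ws ws) → ∃ Ws ws, IsHPartition T ℓ γ Ws ws) ∧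
    (∀ ℓ' : ℕ, 3 ≤ ℓ' → ℓ' ≤ n → ∃ Ws ws, IsHPartition T ℓ' γ Ws ws) := by
  subst hn
  exact ⟨fun ⟨_, _, h⟩ => h.exists_of_succ hT hℓ hγ0.le hγ,
    fun _ hℓ' hℓ'V => exists_isHPartition hT hℓ' hℓ'V hγ0.le hγ⟩

/-- If a tournament on `n > ℓ ≥ 3` vertices (with `0 < γ ≤ 1/6`) has an
`H(ℓ+1,γ)`-partition, then it has an `H(ℓ,γ)`-partition; consequently it has
an `H(ℓ',γ)`-partition for every `3 ≤ ℓ' ≤ n`. -/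
theorem stmt5 {V : Type*} [Fintype V] [DecidableEq V] {n ℓ : ℕ} (γ : ℝ)
    (hn : Fintype.card V = n) (T : V → V → Prop) (hT : IsTournament T)
    (hℓ : 3 ≤ ℓ) (hℓn : ℓ < n) (hγ0 : 0 < γ) (hγ : γ ≤ 1 / 6) :
    ((∃ Ws ws, IsHPartition T (ℓ + 1) γ Ws ws) → ∃ Ws ws, IsHPartition T ℓ γ Ws ws) ∧
    (∀ ℓ' : ℕ, 3 ≤ ℓ' → ℓ' ≤ n → ∃ Ws ws, IsHPartition T ℓ' γ Ws ws) :=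
  stmt5_general γ hn T hT hℓ hγ0 hγ
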